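/- arXiv:2404.15226 — 4 statements merged into one kernel-verified Lean document; each statement's English description precedes it below -/
import Mathlib

section
/- Let 1 < μ < 2 and for λ > 0 define g(λ) = ∫_1^∞ μ s^{-(1+μ)} e^{-λs} ds (the Laplace transform of the Pareto(μ) density). Then lim_{λ → 0+} λ^{-μ} ( g(λ) - 1 + λ·μ/(μ-1) ) = -Γ(1-μ), where Γ is the real Gamma function. (Equivalently, g(λ) = 1 - λ E[s] - Γ(1-μ) λ^μ + o(λ^μ) as λ → 0+, with E[s] = μ/(μ-1).) -/
/-!
With `φ u = exp (-u) - 1 + u` (`expRemainder`), the quantity `g λ - 1 + λ E[s]` is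
`∫₁^∞ μ s^(-1-μ) φ(λ s) ds`, and the substitution `u = λ s` turns it into
`λ^μ ∫_λ^∞ μ u^(-1-μ) φ(u) du`. Since `φ u ≤ min (u ^ 2) u`, the integrand is `O(u^(1-μ))` at `0`
and `O(u^(-μ))` at `∞`, so for `1 < μ < 2` it is integrable on `(0, ∞)` and the limit is
`∫₀^∞ μ u^(-1-μ) φ(u) du`. Integrating by parts twice moves all derivatives onto `φ`, giving
`(μ - 1)⁻¹ Γ(2 - μ) = -Γ(1 - μ)`.
-/

open MeasureTheory Filter Topology Set Real

theorem tendsto_setIntegral_Ioi_nhdsGT {E : Type*} [NormedAddCommGroup E] [NormedSpace ℝ E]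
    {μ : Measure ℝ} {f : ℝ → E} {a : ℝ} (hf : IntegrableOn f (Ioi a) μ) :
    Tendsto (fun b => ∫ x in Ioi b, f x ∂μ) (𝓝[>] a) (𝓝 (∫ x in Ioi a, f x ∂μ)) := by
  refine ((aecover_Ioi_of_Ioi (μ := μ) (a := id) (A := a)
    (tendsto_id.mono_left nhdsWithin_le_nhds)).integral_tendsto_of_countably_generated
    hf).congr' ?_
  filter_upwards [self_mem_nhdsWithin] with b (hb : a < b)
  rw [Measure.restrict_restrict measurableSet_Ioi, Ioi_inter_Ioi, id, max_eq_left hb.le]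

noncomputable def expRemainder (x : ℝ) : ℝ := exp (-x) - 1 + x

lemma expRemainder_nonneg (x : ℝ) : 0 ≤ expRemainder x := by
  rw [expRemainder]
  linarith [one_sub_le_exp_neg x]

lemma expRemainder_le {x : ℝ} (hx : 0 ≤ x) : expRemainder x ≤ x := by
  rw [expRemainder]
  linarith [exp_le_one_iff.mpr (neg_nonpos.mpr hx)]

lemma expRemainder_le_sq {x : ℝ} (hx : |x| ≤ 1) : expRemainder x ≤ x ^ 2 := by
  have h := abs_exp_sub_one_sub_id_le (x := -x) (by rwa [abs_neg])
  rw [neg_sq, sub_neg_eq_add] at h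
  exact (le_abs_self _).trans h

noncomputable def paretoDensity (μ s : ℝ) : ℝ := μ * s ^ (-(1 + μ))

section Pareto

variable {μ : ℝ}

lemma paretoDensity_nonneg (hμ : 0 ≤ μ) {s : ℝ} (hs : 0 ≤ s) : 0 ≤ paretoDensity μ s :=
  mul_nonneg hμ (rpow_nonneg hs _)

lemma paretoDensity_mul_left {l s : ℝ} (hl : 0 ≤ l) (hs : 0 ≤ s) :
    paretoDensity μ (l * s) = l ^ (-(1 + μ)) * paretoDensity μ s := by
  rw [paretoDensity, paretoDensity, mul_rpow hl hs]
  ring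

lemma paretoDensity_mul_self {s : ℝ} (hs : 0 < s) : paretoDensity μ s * s = μ * s ^ (-μ) := by
  rw [paretoDensity, mul_assoc, ← rpow_add_one hs.ne']
  ring_nf

lemma paretoDensity_mul_sq {s : ℝ} (hs : 0 < s) :
    paretoDensity μ s * s ^ 2 = μ * s ^ (1 - μ) := by
  rw [paretoDensity, mul_assoc, ← rpow_natCast, ← rpow_add hs]
  ring_nf

lemma integrableOn_paretoDensity (hμ : 0 < μ) : IntegrableOn (paretoDensity μ) (Ioi 1) :=
  (integrableOn_Ioi_rpow_of_lt (by linarith) one_pos).const_mul μ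

lemma integral_paretoDensity (hμ : 0 < μ) : ∫ s in Ioi 1, paretoDensity μ s = 1 := by
  simp only [paretoDensity]
  rw [integral_const_mul, integral_Ioi_rpow_of_lt (by linarith) one_pos, one_rpow,
    show -(1 + μ) + 1 = -μ by ring, neg_div_neg_eq, mul_one_div_cancel hμ.ne']

lemma integrableOn_paretoDensity_mul_id (hμ : 1 < μ) :
    IntegrableOn (fun s => paretoDensity μ s * s) (Ioi 1) :=
  IntegrableOn.congr_fun ((integrableOn_Ioi_rpow_of_lt (neg_lt_neg hμ) one_pos).const_mul μ)
    (fun _ hs => (paretoDensity_mul_self (one_pos.trans hs)).symm) measurableSet_Ioi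

lemma integral_paretoDensity_mul_id (hμ : 1 < μ) :
    ∫ s in Ioi 1, paretoDensity μ s * s = μ / (μ - 1) := by
  rw [setIntegral_congr_fun measurableSet_Ioi
      (fun s hs => paretoDensity_mul_self (μ := μ) (one_pos.trans hs)),
    integral_const_mul, integral_Ioi_rpow_of_lt (neg_lt_neg hμ) one_pos, one_rpow,
    show -μ + 1 = -(μ - 1) by ring, neg_div_neg_eq, mul_one_div]

lemma integrableOn_paretoDensity_mul_exp (hμ : 0 < μ) {l : ℝ} (hl : 0 ≤ l) :
    IntegrableOn (fun s => paretoDensity μ s * exp (-l * s)) (Ioi 1) := by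
  refine (integrableOn_paretoDensity hμ).mul_bdd (c := 1) (by fun_prop) ?_
  filter_upwards [ae_restrict_mem measurableSet_Ioi] with s (hs : 1 < s)
  rw [norm_of_nonneg (exp_nonneg _), exp_le_one_iff]
  nlinarith

lemma integral_paretoDensity_mul_exp_sub_one_add_mul_mean (hμ : 1 < μ) {l : ℝ} (hl : 0 ≤ l) :
    (∫ s in Ioi 1, paretoDensity μ s * exp (-l * s)) - 1 + l * (μ / (μ - 1)) =
      ∫ s in Ioi 1, paretoDensity μ s * expRemainder (l * s) := by
  have hμ0 : 0 < μ := by linarith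
  have hexp := integrableOn_paretoDensity_mul_exp hμ0 hl
  have hone := integrableOn_paretoDensity hμ0
  have hsub : IntegrableOn (fun s => paretoDensity μ s * exp (-l * s) - paretoDensity μ s)
    (Ioi 1) := hexp.sub hone
  have hid := (integrableOn_paretoDensity_mul_id hμ).const_mul l
  calc (∫ s in Ioi 1, paretoDensity μ s * exp (-l * s)) - 1 + l * (μ / (μ - 1))
      = (∫ s in Ioi 1, paretoDensity μ s * exp (-l * s)) - (∫ s in Ioi 1, paretoDensity μ s) +
          ∫ s in Ioi 1, l * (paretoDensity μ s * s) := by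
        rw [integral_paretoDensity hμ0, integral_const_mul, integral_paretoDensity_mul_id hμ]
    _ = ∫ s in Ioi 1, paretoDensity μ s * expRemainder (l * s) := by
        rw [← integral_sub hexp hone, ← integral_add hsub hid]
        congr with s
        rw [expRemainder]
        ring_nf

lemma integral_paretoDensity_mul_expRemainder_mul_left {l : ℝ} (hl : 0 < l) :
    ∫ s in Ioi 1, paretoDensity μ s * expRemainder (l * s) =
      l ^ μ * ∫ u in Ioi l, paretoDensity μ u * expRemainder u := by
  have h := integral_comp_mul_left_Ioi (fun u => paretoDensity μ u * expRemainder u) 1 hl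
  rw [mul_one, smul_eq_mul, setIntegral_congr_fun measurableSet_Ioi
      (fun s hs => by rw [paretoDensity_mul_left hl.le (one_pos.trans hs).le, mul_assoc]),
    integral_const_mul] at h
  rw [← inv_mul_cancel_left₀ (rpow_pos_of_pos hl (-(1 + μ))).ne' (∫ s in Ioi 1, _), h,
    ← mul_assoc, ← rpow_neg hl.le, ← rpow_neg_one, ← rpow_add hl]
  ring_nf

lemma integrableOn_paretoDensity_mul_expRemainder (hμ1 : 1 < μ) (hμ2 : μ < 2) :
    IntegrableOn (fun u => paretoDensity μ u * expRemainder u) (Ioi 0) := by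
  have hmeas : AEStronglyMeasurable (fun u => paretoDensity μ u * expRemainder u) :=
    (by unfold paretoDensity expRemainder; fun_prop : Measurable _).aestronglyMeasurable
  have hnorm {u : ℝ} (hu : 0 < u) :
      ‖paretoDensity μ u * expRemainder u‖ = paretoDensity μ u * expRemainder u :=
    norm_of_nonneg (mul_nonneg (paretoDensity_nonneg (by linarith) hu.le) (expRemainder_nonneg u))
  rw [← Ioc_union_Ioi_eq_Ioi zero_le_one]
  refine IntegrableOn.union ?_ ?_
  · refine Integrable.mono' ((intervalIntegral.intervalIntegrable_rpow' (a := 0) (b := 1)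
      (r := 1 - μ) (by linarith)).1.const_mul μ) hmeas.restrict ?_
    filter_upwards [ae_restrict_mem measurableSet_Ioc] with u ⟨hu0, hu1⟩
    rw [hnorm hu0, ← paretoDensity_mul_sq hu0]
    exact mul_le_mul_of_nonneg_left (expRemainder_le_sq (by rwa [abs_of_pos hu0]))
      (paretoDensity_nonneg (by linarith) hu0.le)
  · refine Integrable.mono' ((integrableOn_Ioi_rpow_of_lt (neg_lt_neg hμ1) one_pos).const_mul μ)
      hmeas.restrict ?_
    filter_upwards [ae_restrict_mem measurableSet_Ioi] with u (hu : 1 < u)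
    have hu0 : 0 < u := one_pos.trans hu
    rw [hnorm hu0, ← paretoDensity_mul_self hu0]
    exact mul_le_mul_of_nonneg_left (expRemainder_le hu0.le)
      (paretoDensity_nonneg (by linarith) hu0.le)

/-- The sum of the boundary terms of the two integrations by parts
`∫ μ u^(-1-μ) φ = ∫ u^(-μ) φ'` and `∫ u^(-μ) φ' = (μ - 1)⁻¹ ∫ u^(1-μ) φ''`,
where `φ' u = 1 - exp (-u)` and `φ'' u = exp (-u)`. -/
noncomputable def paretoGammaPrimitive (μ u : ℝ) : ℝ :=
  -(u ^ (-μ) * expRemainder u) - (μ - 1)⁻¹ * (u ^ (1 - μ) * (1 - exp (-u)))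

lemma paretoGammaPrimitive_zero : paretoGammaPrimitive μ 0 = 0 := by
  simp [paretoGammaPrimitive, expRemainder]

lemma hasDerivAt_paretoGammaPrimitive (hμ : μ ≠ 1) {u : ℝ} (hu : 0 < u) :
    HasDerivAt (paretoGammaPrimitive μ)
      (paretoDensity μ u * expRemainder u - (μ - 1)⁻¹ * (exp (-u) * u ^ (2 - μ - 1))) u := by
  have hexp : HasDerivAt (fun u => exp (-u)) (-exp (-u)) u := by
    simpa using (hasDerivAt_neg u).exp
  have h : HasDerivAt (paretoGammaPrimitive μ) _ u :=
    (((hasDerivAt_rpow_const (p := -μ) (Or.inl hu.ne')).mul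
        ((hexp.sub_const 1).add (hasDerivAt_id u))).neg).sub
      (((hasDerivAt_rpow_const (p := 1 - μ) (Or.inl hu.ne')).mul
        ((hasDerivAt_const u 1).sub hexp)).const_mul (μ - 1)⁻¹)
  convert h using 1
  have hμ' : μ - 1 ≠ 0 := sub_ne_zero.mpr hμ
  simp only [Pi.add_apply, Pi.sub_apply, id_eq]
  rw [paretoDensity, expRemainder, show -μ - 1 = -(1 + μ) by ring, show 1 - μ - 1 = -μ by ring,
    show 2 - μ - 1 = 1 - μ by ring]
  field_simp
  ring

lemma tendsto_paretoGammaPrimitive_atTop (hμ : 1 < μ) :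
    Tendsto (paretoGammaPrimitive μ) atTop (𝓝 0) := by
  have h1 : Tendsto (fun u : ℝ => u ^ (-μ)) atTop (𝓝 0) := tendsto_rpow_neg_atTop (by linarith)
  have h2 : Tendsto (fun u : ℝ => u ^ (1 - μ)) atTop (𝓝 0) := by
    simpa using tendsto_rpow_neg_atTop (y := μ - 1) (by linarith)
  have h3 := tendsto_exp_neg_atTop_nhds_zero
  have h := ((h1.mul (h3.sub_const 1)).add h2).neg.sub
    ((h2.mul ((tendsto_const_nhds (x := (1 : ℝ))).sub h3)).const_mul (μ - 1)⁻¹)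
  simp only [zero_mul, zero_add, neg_zero, mul_zero, sub_zero] at h
  refine h.congr' ?_
  filter_upwards [eventually_gt_atTop 0] with u hu
  rw [paretoGammaPrimitive, expRemainder, mul_add, ← rpow_add_one hu.ne',
    show -μ + 1 = 1 - μ by ring]

lemma tendsto_paretoGammaPrimitive_nhdsGT_zero (hμ : μ < 2) :
    Tendsto (paretoGammaPrimitive μ) (𝓝[>] 0) (𝓝 0) := by
  have hpow : Tendsto (fun u : ℝ => u ^ (2 - μ)) (𝓝[>] 0) (𝓝 0) := by
    simpa [zero_rpow (by linarith : 2 - μ ≠ 0)] using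
      (continuousAt_rpow_const 0 (2 - μ) (Or.inr (by linarith))).tendsto.mono_left
        nhdsWithin_le_nhds
  have h1 : Tendsto (fun u => u ^ (-μ) * expRemainder u) (𝓝[>] 0) (𝓝 0) := by
    refine squeeze_zero' ?_ ?_ hpow
    · filter_upwards [self_mem_nhdsWithin] with u (hu0 : 0 < u)
      exact mul_nonneg (rpow_nonneg hu0.le _) (expRemainder_nonneg u)
    · filter_upwards [Ioo_mem_nhdsGT zero_lt_one] with u ⟨hu0, hu1⟩
      calc u ^ (-μ) * expRemainder u ≤ u ^ (-μ) * u ^ 2 :=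
            mul_le_mul_of_nonneg_left (expRemainder_le_sq (by rw [abs_of_pos hu0]; exact hu1.le))
              (rpow_nonneg hu0.le _)
        _ = u ^ (2 - μ) := by rw [← rpow_natCast, ← rpow_add hu0]; ring_nf
  have h2 : Tendsto (fun u => u ^ (1 - μ) * (1 - exp (-u))) (𝓝[>] 0) (𝓝 0) := by
    refine squeeze_zero' ?_ ?_ hpow
    · filter_upwards [self_mem_nhdsWithin] with u (hu0 : 0 < u)
      exact mul_nonneg (rpow_nonneg hu0.le _) (sub_nonneg.mpr (exp_le_one_iff.mpr (by linarith)))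
    · filter_upwards [self_mem_nhdsWithin] with u (hu0 : 0 < u)
      calc u ^ (1 - μ) * (1 - exp (-u)) ≤ u ^ (1 - μ) * u :=
            mul_le_mul_of_nonneg_left (by linarith [one_sub_le_exp_neg u]) (rpow_nonneg hu0.le _)
        _ = u ^ (2 - μ) := by rw [← rpow_add_one hu0.ne']; ring_nf
  have h := h1.neg.sub (h2.const_mul (μ - 1)⁻¹)
  rwa [neg_zero, mul_zero, sub_zero] at h

lemma integral_paretoDensity_mul_expRemainder (hμ1 : 1 < μ) (hμ2 : μ < 2) :
    ∫ u in Ioi 0, paretoDensity μ u * expRemainder u = -Gamma (1 - μ) := by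
  have hF := integrableOn_paretoDensity_mul_expRemainder hμ1 hμ2
  have hΓ := (GammaIntegral_convergent (s := 2 - μ) (by linarith)).const_mul (μ - 1)⁻¹
  have hcont : ContinuousWithinAt (paretoGammaPrimitive μ) (Ici 0) 0 := by
    rw [← continuousWithinAt_Ioi_iff_Ici, ContinuousWithinAt, paretoGammaPrimitive_zero]
    exact tendsto_paretoGammaPrimitive_nhdsGT_zero hμ2
  have h := integral_Ioi_of_hasDerivAt_of_tendsto hcont
    (fun u hu => hasDerivAt_paretoGammaPrimitive hμ1.ne' hu) (hF.sub hΓ)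
    (tendsto_paretoGammaPrimitive_atTop hμ1)
  rw [integral_sub hF hΓ, integral_const_mul, ← Gamma_eq_integral (by linarith),
    paretoGammaPrimitive_zero, sub_zero, show 2 - μ = (1 - μ) + 1 by ring,
    Gamma_add_one (by linarith), sub_eq_zero] at h
  have hμ' : μ - 1 ≠ 0 := by linarith
  rw [h]
  field_simp
  ring

end Pareto

/-- For `1 < μ < 2`, the Laplace transform
`g(λ) = ∫_1^∞ μ s^{-(1+μ)} e^{-λ s} ds` of the Pareto(μ) density satisfies
`λ^{-μ} (g(λ) - 1 + λ μ/(μ-1)) → -Γ(1-μ)` as `λ → 0⁺`. -/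
theorem pareto_laplace_expansion (μ : ℝ) (hμ1 : 1 < μ) (hμ2 : μ < 2) :
    Tendsto (fun l : ℝ =>
        l ^ (-μ) *
          ((∫ s in Ioi (1 : ℝ), μ * s ^ (-(1 + μ)) * Real.exp (-l * s)) - 1 + l * (μ / (μ - 1))))
      (𝓝[>] 0) (𝓝 (-Real.Gamma (1 - μ))) := by
  rw [← integral_paretoDensity_mul_expRemainder hμ1 hμ2]
  refine (tendsto_setIntegral_Ioi_nhdsGT
    (integrableOn_paretoDensity_mul_expRemainder hμ1 hμ2)).congr' ?_
  filter_upwards [self_mem_nhdsWithin] with l (hl : 0 < l)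
  change _ = l ^ (-μ) * ((∫ s in Ioi 1, paretoDensity μ s * exp (-l * s)) - 1 + l * (μ / (μ - 1)))
  rw [integral_paretoDensity_mul_exp_sub_one_add_mul_mean hμ1 hl.le,
    integral_paretoDensity_mul_expRemainder_mul_left hl, ← mul_assoc, ← rpow_add hl,
    neg_add_cancel, rpow_zero, one_mul]
end

section
/- Let 1 < μ < 2. Then lim_{λ → 0+} λ^{1-μ} ( ∫_1^∞ μ s^{-μ} e^{-λs} ds - μ/(μ-1) ) = μ Γ(1-μ). (The integral equals E[s e^{-λs}] for s Pareto(μ), so E[s e^{-λs}] = μ/(μ-1) + μ Γ(1-μ) λ^{μ-1} + o(λ^{μ-1}) as λ → 0+.) -/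
/-!
Substituting `u = λ s` gives
`λ^{1-μ} (∫_1^∞ μ s^{-μ} e^{-λ s} ds - μ/(μ-1)) = μ ∫_λ^∞ u^{-μ} (e^{-u} - 1) du`.
For `1 < μ < 2` the integrand is `O(u^{1-μ})` at `0` and `O(u^{-μ})` at `∞`, hence integrable on
`(0, ∞)`, so the right side tends to `μ ∫_0^∞ u^{-μ} (e^{-u} - 1) du`. Integrating by parts against
`u^{1-μ}/(1-μ)` turns this integral into `Γ(2-μ)/(1-μ) = Γ(1-μ)`.
-/

open MeasureTheory Filter Topology Set Real

lemma norm_rpow_mul_exp_neg_sub_one_le (r : ℝ) {x : ℝ} (hx : 0 < x) :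
    ‖x ^ r * (exp (-x) - 1)‖ ≤ x ^ r * min x 1 := by
  have hexp : |exp (-x) - 1| ≤ min x 1 := by
    rw [abs_sub_comm, abs_of_nonneg (sub_nonneg.mpr (exp_le_one_iff.mpr (by linarith)))]
    exact le_min (by linarith [one_sub_le_exp_neg x]) (by linarith [exp_pos (-x)])
  rw [norm_mul, norm_of_nonneg (rpow_nonneg hx.le r), norm_eq_abs]
  gcongr

lemma tendsto_rpow_mul_exp_neg_sub_one_nhdsGT_zero {r : ℝ} (hr : -1 < r) :
    Tendsto (fun x : ℝ => x ^ r * (exp (-x) - 1)) (𝓝[>] 0) (𝓝 0) := by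
  have hpow : Tendsto (fun x : ℝ => x ^ (r + 1)) (𝓝[>] 0) (𝓝 0) := by
    simpa [zero_rpow (by linarith : r + 1 ≠ 0)] using
      (continuousAt_rpow_const 0 (r + 1) (Or.inr (by linarith))).tendsto.mono_left
        nhdsWithin_le_nhds
  refine squeeze_zero_norm' (eventually_nhdsWithin_of_forall fun x (hx : 0 < x) => ?_) hpow
  calc _ ≤ x ^ r * min x 1 := norm_rpow_mul_exp_neg_sub_one_le r hx
    _ ≤ x ^ r * x := mul_le_mul_of_nonneg_left (min_le_left _ _) (rpow_nonneg hx.le _)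
    _ = x ^ (r + 1) := by rw [rpow_add_one hx.ne']

lemma tendsto_rpow_mul_exp_neg_sub_one_atTop {r : ℝ} (hr : r < 0) :
    Tendsto (fun x : ℝ => x ^ r * (exp (-x) - 1)) atTop (𝓝 0) := by
  have hpow := tendsto_rpow_neg_atTop (neg_pos.mpr hr)
  rw [neg_neg] at hpow
  simpa using hpow.mul (tendsto_exp_neg_atTop_nhds_zero.sub_const 1)

section ExpSubOneKernel

variable {μ : ℝ}

lemma integrableOn_rpow_neg_mul_exp_neg_sub_one (hμ1 : 1 < μ) (hμ2 : μ < 2) :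
    IntegrableOn (fun x : ℝ => x ^ (-μ) * (exp (-x) - 1)) (Ioi 0) := by
  have hmeas : AEStronglyMeasurable (fun x : ℝ => x ^ (-μ) * (exp (-x) - 1)) :=
    (by fun_prop : Measurable fun x : ℝ => x ^ (-μ) * (exp (-x) - 1)).aestronglyMeasurable
  have near_zero : IntegrableOn (fun x : ℝ => x ^ (-μ) * (exp (-x) - 1)) (Ioc 0 1) := by
    have hdom : IntegrableOn (fun x : ℝ => x ^ (1 - μ)) (Ioc 0 1) :=
      (intervalIntegrable_iff_integrableOn_Ioc_of_le (zero_le_one' ℝ)).mp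
        (intervalIntegral.intervalIntegrable_rpow' (by linarith))
    refine hdom.mono' hmeas.restrict (ae_restrict_of_forall_mem measurableSet_Ioc fun x hx => ?_)
    calc _ ≤ x ^ (-μ) * min x 1 := norm_rpow_mul_exp_neg_sub_one_le _ hx.1
      _ ≤ x ^ (-μ) * x := mul_le_mul_of_nonneg_left (min_le_left _ _) (rpow_nonneg hx.1.le _)
      _ = x ^ (1 - μ) := by rw [sub_eq_neg_add, rpow_add hx.1, rpow_one]
  have near_top : IntegrableOn (fun x : ℝ => x ^ (-μ) * (exp (-x) - 1)) (Ioi 1) := by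
    refine (integrableOn_Ioi_rpow_of_lt (a := -μ) (by linarith) one_pos).mono' hmeas.restrict
      (ae_restrict_of_forall_mem measurableSet_Ioi fun x hx => ?_)
    calc _ ≤ x ^ (-μ) * min x 1 := norm_rpow_mul_exp_neg_sub_one_le _ (one_pos.trans hx)
      _ ≤ x ^ (-μ) * 1 :=
        mul_le_mul_of_nonneg_left (min_le_right _ _) (rpow_nonneg (one_pos.trans hx).le _)
      _ = x ^ (-μ) := mul_one _
  simpa only [Ioc_union_Ioi_eq_Ioi (zero_le_one' ℝ)] using near_zero.union near_top

lemma integral_rpow_neg_mul_exp_neg_sub_one (hμ1 : 1 < μ) (hμ2 : μ < 2) :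
    ∫ x in Ioi (0 : ℝ), x ^ (-μ) * (exp (-x) - 1) = Gamma (1 - μ) := by
  have hμ : 1 - μ ≠ 0 := by linarith
  have hu : ∀ x ∈ Ioi (0 : ℝ), HasDerivAt (fun x => (1 - μ)⁻¹ * x ^ (1 - μ)) (x ^ (-μ)) x := by
    intro x hx
    refine ((hasDerivAt_rpow_const (Or.inl (ne_of_gt hx))).const_mul _).congr_deriv ?_
    rw [sub_sub_cancel_left, inv_mul_cancel_left₀ hμ]
  have hv : ∀ x ∈ Ioi (0 : ℝ), HasDerivAt (fun x => exp (-x) - 1) (-exp (-x)) x := fun x _ => by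
    simpa using ((hasDerivAt_neg x).exp).sub_const 1
  have hGamma : IntegrableOn (fun x => exp (-x) * x ^ (1 - μ)) (Ioi 0) := by
    simpa [show 2 - μ - 1 = 1 - μ by ring] using GammaIntegral_convergent (by linarith : 0 < 2 - μ)
  have ibp := integral_Ioi_mul_deriv_eq_deriv_mul hu hv ?_
    (integrableOn_rpow_neg_mul_exp_neg_sub_one hμ1 hμ2) (a' := 0) (b' := 0) ?_ ?_
  · have hGamma_eq : ∫ x in Ioi (0 : ℝ), exp (-x) * x ^ (1 - μ) = (1 - μ) * Gamma (1 - μ) := by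
      rw [← Gamma_add_one hμ, Gamma_eq_integral (by linarith), add_sub_cancel_right]
    calc ∫ x in Ioi (0 : ℝ), x ^ (-μ) * (exp (-x) - 1)
        = -∫ x in Ioi (0 : ℝ), (1 - μ)⁻¹ * x ^ (1 - μ) * -exp (-x) := by linarith
      _ = (1 - μ)⁻¹ * ∫ x in Ioi (0 : ℝ), exp (-x) * x ^ (1 - μ) := by
        rw [← integral_neg, ← integral_const_mul]
        congr 1 with x
        ring
      _ = Gamma (1 - μ) := by rw [hGamma_eq, inv_mul_cancel_left₀ hμ]
  · exact IntegrableOn.congr_fun (hGamma.const_mul (1 - μ)⁻¹).neg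
      (fun x _ => by simp only [Pi.mul_apply, Pi.neg_apply]; ring) measurableSet_Ioi
  · have := (tendsto_rpow_mul_exp_neg_sub_one_nhdsGT_zero (r := 1 - μ) (by linarith)).const_mul
      (1 - μ)⁻¹
    rw [mul_zero] at this
    exact this.congr fun x => by simp only [Pi.mul_apply]; ring
  · have := (tendsto_rpow_mul_exp_neg_sub_one_atTop (r := 1 - μ) (by linarith)).const_mul
      (1 - μ)⁻¹
    rw [mul_zero] at this
    exact this.congr fun x => by simp only [Pi.mul_apply]; ring

lemma integral_Ioi_one_rpow_neg_mul_exp_neg_mul_sub_one {l : ℝ} (hl : 0 < l) :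
    ∫ s in Ioi (1 : ℝ), s ^ (-μ) * (exp (-l * s) - 1) =
      l ^ (μ - 1) * ∫ x in Ioi l, x ^ (-μ) * (exp (-x) - 1) := by
  have hscale := integral_comp_mul_left_Ioi (fun x => x ^ (-μ) * (exp (-x) - 1)) 1 hl
  rw [mul_one, smul_eq_mul] at hscale
  have hpoint : ∀ s ∈ Ioi (1 : ℝ),
      s ^ (-μ) * (exp (-l * s) - 1) = l ^ μ * ((l * s) ^ (-μ) * (exp (-(l * s)) - 1)) := by
    intro s hs
    rw [mul_rpow hl.le (zero_lt_one.trans hs).le, rpow_neg hl.le, neg_mul]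
    field_simp
  rw [setIntegral_congr_fun measurableSet_Ioi hpoint, integral_const_mul, hscale,
    rpow_sub_one hl.ne']
  ring

lemma integral_Ioi_one_rpow_neg_mul_exp_neg_mul (hμ : 1 < μ) {l : ℝ} (hl : 0 < l) :
    ∫ s in Ioi (1 : ℝ), s ^ (-μ) * exp (-l * s) =
      1 / (μ - 1) + l ^ (μ - 1) * ∫ x in Ioi l, x ^ (-μ) * (exp (-x) - 1) := by
  have hpow : IntegrableOn (fun s : ℝ => s ^ (-μ)) (Ioi 1) :=
    integrableOn_Ioi_rpow_of_lt (by linarith) one_pos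
  have hdamped : IntegrableOn (fun s : ℝ => s ^ (-μ) * exp (-l * s)) (Ioi 1) := by
    refine hpow.mul_bdd (c := 1) (by fun_prop) (ae_restrict_of_forall_mem measurableSet_Ioi
      fun s (hs : 1 < s) => ?_)
    rw [norm_of_nonneg (exp_pos _).le, exp_le_one_iff]
    nlinarith
  rw [← integral_Ioi_one_rpow_neg_mul_exp_neg_mul_sub_one hl]
  simp_rw [mul_sub, mul_one]
  rw [integral_sub hdamped hpow, integral_Ioi_rpow_of_lt (by linarith) one_pos, one_rpow,
    neg_add_eq_sub, ← neg_sub, div_neg]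
  ring

end ExpSubOneKernel

/-- For `1 < μ < 2`,
`λ^{1-μ} (∫_1^∞ μ s^{-μ} e^{-λ s} ds - μ/(μ-1)) → μ Γ(1-μ)` as `λ → 0⁺`;
that is, `E[s e^{-λ s}] = μ/(μ-1) + μ Γ(1-μ) λ^{μ-1} + o(λ^{μ-1})` for `s` Pareto(μ). -/
theorem pareto_damped_first_moment_expansion (μ : ℝ) (hμ1 : 1 < μ) (hμ2 : μ < 2) :
    Tendsto (fun l : ℝ =>
        l ^ (1 - μ) *
          ((∫ s in Ioi (1 : ℝ), μ * s ^ (-μ) * Real.exp (-l * s)) - μ / (μ - 1)))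
      (𝓝[>] 0) (𝓝 (μ * Real.Gamma (1 - μ))) := by
  have hlim : Tendsto (fun l => ∫ x in Ioi l, x ^ (-μ) * (exp (-x) - 1)) (𝓝[>] 0)
      (𝓝 (Gamma (1 - μ))) := by
    rw [← integral_rpow_neg_mul_exp_neg_sub_one hμ1 hμ2]
    exact (integrableOn_rpow_neg_mul_exp_neg_sub_one hμ1 hμ2).continuousWithinAt_Ici_primitive_Ioi
      |>.mono_left (nhdsWithin_mono 0 Ioi_subset_Ici_self)
  refine (hlim.const_mul μ).congr' (eventually_nhdsWithin_of_forall fun l (hl : 0 < l) => ?_)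
  have hpow : l ^ (1 - μ) * l ^ (μ - 1) = 1 := by
    rw [← rpow_add hl, add_comm, sub_add_sub_cancel, sub_self, rpow_zero]
  simp_rw [mul_assoc μ, integral_const_mul, integral_Ioi_one_rpow_neg_mul_exp_neg_mul hμ1 hl]
  linear_combination (-(μ * ∫ x in Ioi l, x ^ (-μ) * (exp (-x) - 1))) * hpow
end

section
/- Let 1 < μ < 2 and let (s_i)_{i≥1} be i.i.d. Pareto(μ) random variables. Then for every λ ≥ 0, lim_{K → ∞} E[ exp( -λ K^{-2/μ} Σ_{i=1}^K s_i² ) ] = exp( -Γ(1-μ/2) λ^{μ/2} ). (Thus K^{-2/μ} Σ_{i=1}^K s_i² converges in distribution to the one-sided μ/2-stable law with Laplace transform exp(-Γ(1-μ/2) t^{μ/2}).) -/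
open MeasureTheory ProbabilityTheory Filter Topology Set

/-- The Pareto(μ) law on `[1, ∞)`, with density `μ s^{-(1+μ)}` for `s ≥ 1`. -/
noncomputable def paretoLaw (μ : ℝ) : Measure ℝ :=
  (volume.restrict (Ici (1 : ℝ))).withDensity fun x => ENNReal.ofReal (μ * x ^ (-(1 + μ)))

/-!
Put `β = μ / 2`. Substituting `y = x²` shows that `s²` is Pareto(`β`), and substituting `y = t x`
shows that a Pareto(`β`) variable `X` has Laplace transform
`E e^{-tX} = 1 - t^β c(t)` with `c(t) = ∫_t^∞ (1 - e^{-y}) β y^{-(1+β)} dy`.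
Integrating by parts against Euler's integral gives `c(0) = Γ(1 - β)`, finite because `β < 1`.
By independence the expectation at step `K` is `(1 - t_K^β c(t_K))^K` with `t_K = l K^{-1/β}`;
since `K t_K^β = l^β` and `t_K → 0`, this tends to `exp(-l^β Γ(1 - β))`.
-/

open Real

lemma one_sub_exp_neg_nonneg {y : ℝ} (hy : 0 ≤ y) : 0 ≤ 1 - exp (-y) :=
  sub_nonneg.mpr (exp_le_one_iff.mpr (neg_nonpos.mpr hy))

lemma one_sub_exp_neg_le (y : ℝ) : 1 - exp (-y) ≤ y :=
  sub_le_comm.mp (one_sub_le_exp_neg y)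

lemma one_sub_exp_neg_le_one (y : ℝ) : 1 - exp (-y) ≤ 1 :=
  sub_le_self 1 (exp_pos _).le

lemma integrableOn_one_sub_exp_neg_mul_rpow {β : ℝ} (hβ0 : 0 < β) (hβ1 : β < 1) :
    IntegrableOn (fun y => (1 - exp (-y)) * (β * y ^ (-(1 + β)))) (Ioi 0) := by
  have hmeas : AEStronglyMeasurable (fun y : ℝ => (1 - exp (-y)) * (β * y ^ (-(1 + β)))) :=
    (by fun_prop : Measurable _).aestronglyMeasurable
  have hnorm : ∀ y : ℝ, 0 < y →
      ‖(1 - exp (-y)) * (β * y ^ (-(1 + β)))‖ = (1 - exp (-y)) * (β * y ^ (-(1 + β))) :=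
    fun y hy => Real.norm_of_nonneg (mul_nonneg (one_sub_exp_neg_nonneg hy.le) (by positivity))
  rw [← Ioc_union_Ioi_eq_Ioi zero_le_one, integrableOn_union]
  constructor
  · have hdom : IntegrableOn (fun y : ℝ => β * y ^ (-β)) (Ioc 0 1) :=
      ((intervalIntegrable_iff_integrableOn_Ioc_of_le zero_le_one).mp
        (intervalIntegral.intervalIntegrable_rpow' (by linarith))).const_mul β
    refine hdom.mono' hmeas.restrict ?_
    filter_upwards [ae_restrict_mem measurableSet_Ioc] with y hy
    obtain ⟨hy, -⟩ := hy
    rw [hnorm y hy]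
    calc (1 - exp (-y)) * (β * y ^ (-(1 + β))) ≤ y * (β * y ^ (-(1 + β))) :=
          mul_le_mul_of_nonneg_right (one_sub_exp_neg_le y) (by positivity)
      _ = β * y ^ (-β) := by
          rw [show -β = 1 + -(1 + β) by ring, rpow_add hy, rpow_one]; ring
  · have hdom : IntegrableOn (fun y : ℝ => β * y ^ (-(1 + β))) (Ioi 1) :=
      (integrableOn_Ioi_rpow_of_lt (by linarith) zero_lt_one).const_mul β
    refine hdom.mono' hmeas.restrict ?_
    filter_upwards [ae_restrict_mem measurableSet_Ioi] with y (hy : 1 < y)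
    have hy0 : 0 < y := zero_lt_one.trans hy
    rw [hnorm y hy0]
    exact mul_le_of_le_one_left (by positivity) (one_sub_exp_neg_le_one y)

lemma integral_one_sub_exp_neg_mul_rpow {β : ℝ} (hβ0 : 0 < β) (hβ1 : β < 1) :
    ∫ y in Ioi 0, (1 - exp (-y)) * (β * y ^ (-(1 + β))) = Gamma (1 - β) := by
  have hu : ∀ y ∈ Ioi (0 : ℝ), HasDerivAt (fun y => 1 - exp (-y)) (exp (-y)) y := fun y _ => by
    simpa using ((hasDerivAt_neg y).exp).const_sub 1
  have hv : ∀ y ∈ Ioi (0 : ℝ), HasDerivAt (fun y => -y ^ (-β)) (β * y ^ (-(1 + β))) y :=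
    fun y hy => (hasDerivAt_rpow_const (p := -β) (Or.inl (ne_of_gt hy))).neg.congr_deriv (by
      rw [show -β - 1 = -(1 + β) by ring]; ring)
  have hΓ : IntegrableOn (fun y => exp (-y) * y ^ (-β)) (Ioi 0) := by
    simpa [show 1 - β - 1 = -β by ring] using GammaIntegral_convergent (s := 1 - β) (by linarith)
  have h_zero : Tendsto (fun y => (1 - exp (-y)) * -y ^ (-β)) (𝓝[>] 0) (𝓝 0) := by
    have hlim : Tendsto (fun y : ℝ => y ^ (1 - β)) (𝓝[>] 0) (𝓝 0) := by
      simpa [zero_rpow (by linarith : 1 - β ≠ 0)] using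
        ((continuousAt_rpow_const 0 (1 - β) (Or.inr (by linarith))).tendsto).mono_left
          nhdsWithin_le_nhds
    refine squeeze_zero_norm' ?_ hlim
    filter_upwards [self_mem_nhdsWithin] with y (hy : 0 < y)
    rw [norm_mul, norm_neg, Real.norm_of_nonneg (one_sub_exp_neg_nonneg hy.le),
      Real.norm_of_nonneg (by positivity), show 1 - β = 1 + -β by ring, rpow_add hy, rpow_one]
    exact mul_le_mul_of_nonneg_right (one_sub_exp_neg_le y) (by positivity)
  have h_infty : Tendsto (fun y => (1 - exp (-y)) * -y ^ (-β)) atTop (𝓝 0) := by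
    have h1 : Tendsto (fun y : ℝ => 1 - exp (-y)) atTop (𝓝 1) := by
      simpa using tendsto_const_nhds.sub (tendsto_exp_neg_atTop_nhds_zero)
    simpa using h1.mul (tendsto_rpow_neg_atTop hβ0).neg
  rw [integral_Ioi_mul_deriv_eq_deriv_mul hu hv (integrableOn_one_sub_exp_neg_mul_rpow hβ0 hβ1)
    (by simpa [Pi.mul_def] using hΓ.neg) h_zero h_infty]
  simp only [mul_neg, integral_neg, sub_zero, zero_sub, neg_neg]
  rw [Gamma_eq_integral (by linarith)]
  simp only [show 1 - β - 1 = -β by ring]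

lemma integral_paretoLaw {p : ℝ} (hp : 0 ≤ p) (f : ℝ → ℝ) :
    ∫ x, f x ∂paretoLaw p = ∫ x in Ioi 1, p * x ^ (-(1 + p)) * f x := by
  rw [paretoLaw, integral_withDensity_eq_integral_toReal_smul (by fun_prop)
    (ae_of_all _ fun _ => ENNReal.ofReal_lt_top), integral_Ici_eq_integral_Ioi]
  refine setIntegral_congr_fun measurableSet_Ioi fun x (hx : 1 < x) => ?_
  have : 0 < x := zero_lt_one.trans hx
  rw [ENNReal.toReal_ofReal (by positivity), smul_eq_mul]

lemma integral_paretoLaw_comp_sq {p : ℝ} (hp : 0 ≤ p) (f : ℝ → ℝ) :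
    ∫ x, f (x ^ 2) ∂paretoLaw p = ∫ y, f y ∂paretoLaw (p / 2) := by
  rw [integral_paretoLaw hp, integral_paretoLaw (by positivity),
    ← integral_comp_rpow_Ioi_of_pos' (g := fun y => p / 2 * y ^ (-(1 + p / 2)) * f y) two_pos
      zero_le_one, one_rpow]
  refine setIntegral_congr_fun measurableSet_Ioi fun x (hx : 1 < x) => ?_
  have hx0 : 0 < x := zero_lt_one.trans hx
  rw [smul_eq_mul, show (2 : ℝ) - 1 = 1 by norm_num, rpow_one, rpow_two,
    show -(1 + p) = 1 + 2 * -(1 + p / 2) by ring, rpow_add hx0, rpow_one, rpow_mul hx0.le, rpow_two]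
  ring

lemma integral_pareto_density_eq_one {p : ℝ} (hp : 0 < p) :
    ∫ x in Ioi 1, p * x ^ (-(1 + p)) = 1 := by
  rw [integral_const_mul, integral_Ioi_rpow_of_lt (by linarith) zero_lt_one, one_rpow,
    show -(1 + p) + 1 = -p by ring]
  field_simp

lemma integral_one_sub_exp_neg_mul_pareto_density {p t : ℝ} (hp : 0 < p) (ht : 0 ≤ t) :
    ∫ x in Ioi 1, (1 - exp (-(t * x))) * (p * x ^ (-(1 + p)))
      = t ^ p * ∫ y in Ioi t, (1 - exp (-y)) * (p * y ^ (-(1 + p))) := by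
  rcases ht.eq_or_lt with rfl | ht
  · simp [zero_rpow hp.ne']
  have hscale := integral_comp_mul_left_Ioi (fun y => (1 - exp (-y)) * (p * y ^ (-(1 + p)))) 1 ht
  rw [mul_one, smul_eq_mul] at hscale
  calc ∫ x in Ioi 1, (1 - exp (-(t * x))) * (p * x ^ (-(1 + p)))
      = t ^ (1 + p) * ∫ x in Ioi 1, (1 - exp (-(t * x))) * (p * (t * x) ^ (-(1 + p))) := by
        rw [← integral_const_mul]
        refine setIntegral_congr_fun measurableSet_Ioi fun x (hx : 1 < x) => ?_
        rw [mul_rpow ht.le (zero_lt_one.trans hx).le, rpow_neg ht.le]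
        field_simp
    _ = t ^ p * ∫ y in Ioi t, (1 - exp (-y)) * (p * y ^ (-(1 + p))) := by
        rw [hscale, rpow_add ht, rpow_one, mul_comm t, mul_assoc, mul_inv_cancel_left₀ ht.ne']

lemma integral_exp_neg_mul_paretoLaw {p t : ℝ} (hp : 0 < p) (ht : 0 ≤ t) :
    ∫ x, exp (-(t * x)) ∂paretoLaw p
      = 1 - t ^ p * ∫ y in Ioi t, (1 - exp (-y)) * (p * y ^ (-(1 + p))) := by
  have hdens : IntegrableOn (fun x => p * x ^ (-(1 + p))) (Ioi 1) :=
    (integrableOn_Ioi_rpow_of_lt (by linarith) zero_lt_one).const_mul p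
  have hdefect : IntegrableOn (fun x => (1 - exp (-(t * x))) * (p * x ^ (-(1 + p)))) (Ioi 1) := by
    refine hdens.mono' (by fun_prop : Measurable _).aestronglyMeasurable ?_
    filter_upwards [ae_restrict_mem measurableSet_Ioi] with x (hx : 1 < x)
    have hx0 : 0 < x := zero_lt_one.trans hx
    rw [Real.norm_of_nonneg (mul_nonneg (one_sub_exp_neg_nonneg (by positivity)) (by positivity))]
    exact mul_le_of_le_one_left (by positivity) (one_sub_exp_neg_le_one _)
  rw [integral_paretoLaw hp.le, ← integral_one_sub_exp_neg_mul_pareto_density hp ht]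
  calc ∫ x in Ioi 1, p * x ^ (-(1 + p)) * exp (-(t * x))
      = ∫ x in Ioi 1, p * x ^ (-(1 + p)) - (1 - exp (-(t * x))) * (p * x ^ (-(1 + p))) := by
        congr 1 with x
        ring
    _ = _ := by rw [integral_sub hdens hdefect, integral_pareto_density_eq_one hp]

lemma integral_exp_sum_of_iIndepFun {ι Ω : Type*} [MeasurableSpace Ω] {P : Measure Ω}
    {X : ι → Ω → ℝ} (hX : ∀ i, Measurable (X i)) (hindep : iIndepFun X P)
    {ν : Measure ℝ} (hident : ∀ i, P.map (X i) = ν) {f : ℝ → ℝ} (hf : Measurable f)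
    (s : Finset ι) :
    ∫ ω, exp (∑ i ∈ s, f (X i ω)) ∂P = (∫ x, exp (f x) ∂ν) ^ s.card := by
  have hmgf := (hindep.comp (fun _ => f) fun _ => hf).mgf_sum (t := 1) (fun i => hf.comp (hX i)) s
  have hfactor : ∀ i, ∫ ω, exp (f (X i ω)) ∂P = ∫ x, exp (f x) ∂ν := fun i => by
    rw [← hident i, integral_map (hX i).aemeasurable (by fun_prop)]
  simpa [mgf, hfactor, Finset.sum_apply] using hmgf

theorem sum_of_squares_stable_limit_general
    {Ω : Type*} [MeasureSpace Ω]
    (μ : ℝ) (hμ1 : 1 < μ) (hμ2 : μ < 2)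
    (s : ℕ → Ω → ℝ) (hmeas : ∀ i, Measurable (s i))
    (hindep : iIndepFun s ℙ)
    (hdist : ∀ i, Measure.map (s i) ℙ = paretoLaw μ)
    (l : ℝ) (hl : 0 ≤ l) :
    Tendsto (fun K : ℕ =>
        ∫ ω, Real.exp (-l * (K : ℝ) ^ (-(2 / μ)) * ∑ i ∈ Finset.range K, (s i ω) ^ 2) ∂ℙ)
      atTop
      (𝓝 (Real.exp (-Real.Gamma (1 - μ / 2) * l ^ (μ / 2)))) := by
  have hμ0 : 0 < μ := zero_lt_one.trans hμ1
  set t : ℕ → ℝ := fun K => l * (K : ℝ) ^ (-(2 / μ))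
  set c : ℝ → ℝ := fun a => ∫ y in Ioi a, (1 - exp (-y)) * (μ / 2 * y ^ (-(1 + μ / 2)))
  have ht : Tendsto t atTop (𝓝[≥] 0) := by
    refine tendsto_nhdsWithin_iff.mpr
      ⟨?_, Eventually.of_forall fun K => mem_Ici.mpr (by positivity)⟩
    simpa using ((tendsto_rpow_neg_atTop (by positivity)).comp
      tendsto_natCast_atTop_atTop).const_mul l
  have hc : Tendsto c (𝓝[≥] 0) (𝓝 (Gamma (1 - μ / 2))) := by
    rw [← integral_one_sub_exp_neg_mul_rpow (by positivity) (by linarith)]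
    exact (integrableOn_one_sub_exp_neg_mul_rpow (by positivity) (by linarith)
      ).continuousWithinAt_Ici_primitive_Ioi
  have hlaw : ∀ K : ℕ,
      ∫ ω, exp (-l * (K : ℝ) ^ (-(2 / μ)) * ∑ i ∈ Finset.range K, (s i ω) ^ 2) ∂ℙ
        = (1 + -(t K ^ (μ / 2) * c (t K))) ^ K := fun K => by
    have hsq := integral_paretoLaw_comp_sq hμ0.le fun y => exp (-(t K * y))
    beta_reduce at hsq
    have hsum := integral_exp_sum_of_iIndepFun hmeas hindep hdist
      (f := fun x => -(t K * x ^ 2)) (by fun_prop) (Finset.range K)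
    rw [Finset.card_range, hsq, integral_exp_neg_mul_paretoLaw (by positivity) (by positivity)]
      at hsum
    rw [← sub_eq_add_neg, ← hsum]
    congr 1 with ω
    rw [Finset.mul_sum]
    exact congrArg exp (Finset.sum_congr rfl fun i _ => by ring)
  have hscale : ∀ K : ℕ, 1 ≤ K → (K : ℝ) * t K ^ (μ / 2) = l ^ (μ / 2) := fun K hK => by
    have hK : (0 : ℝ) < K := by exact_mod_cast hK
    rw [mul_rpow hl (by positivity), ← rpow_mul hK.le, show -(2 / μ) * (μ / 2) = -1 by field_simp,
      rpow_neg_one]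
    field_simp
  simp_rw [hlaw]
  rw [neg_mul, mul_comm]
  refine tendsto_one_add_pow_exp_of_tendsto ?_
  refine ((hc.comp ht).const_mul (l ^ (μ / 2))).neg.congr' ?_
  filter_upwards [eventually_ge_atTop 1] with K hK
  rw [Function.comp_apply, mul_neg, ← mul_assoc, hscale K hK]

/-- For `1 < μ < 2` and i.i.d. Pareto(μ) variables `s_i`, for every `λ ≥ 0`,
`E[exp(-λ K^{-2/μ} Σ_{i=1}^K s_i²)] → exp(-Γ(1-μ/2) λ^{μ/2})` as `K → ∞`:
the rescaled sum of squares converges to a one-sided `μ/2`-stable law. -/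
theorem sum_of_squares_stable_limit
    {Ω : Type*} [MeasureSpace Ω] [IsProbabilityMeasure (ℙ : Measure Ω)]
    (μ : ℝ) (hμ1 : 1 < μ) (hμ2 : μ < 2)
    (s : ℕ → Ω → ℝ) (hmeas : ∀ i, Measurable (s i))
    (hindep : iIndepFun s ℙ)
    (hdist : ∀ i, Measure.map (s i) ℙ = paretoLaw μ)
    (l : ℝ) (hl : 0 ≤ l) :
    Tendsto (fun K : ℕ =>
        ∫ ω, Real.exp (-l * (K : ℝ) ^ (-(2 / μ)) * ∑ i ∈ Finset.range K, (s i ω) ^ 2) ∂ℙ)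
      atTop
      (𝓝 (Real.exp (-Real.Gamma (1 - μ / 2) * l ^ (μ / 2)))) :=
  sum_of_squares_stable_limit_general μ hμ1 hμ2 s hmeas hindep hdist l hl
end

section
/- Let 1 < μ < 2 and let H_K be the Herfindahl–Hirschman index of K i.i.d. Pareto(μ) sub-unit sizes. Then log H_K / log K converges in probability to 2(1-μ)/μ as K → ∞; that is, for every ε > 0, lim_{K → ∞} P( | log H_K / log K - 2(1-μ)/μ | > ε ) = 0. (The typical value of the Herfindahl index scales as K^{2(1-μ)/μ}, a much slower decay than the 1/K obtained when sub-unit sizes have finite variance.) -/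
open MeasureTheory ProbabilityTheory Filter Topology Set

/-!
Put `a = 1/μ` and `δ = ε/8`. Outside events of vanishing probability, a sample of size `K`
has sum `S ≤ K^{1+δ}` (Markov: the mean is finite); no term above `K^{a(1+δ)}` (union bound
on the tail `t^{-μ}`); some term above `K^{a(1-δ)}` (by independence, all terms stay below it
with probability `≤ exp(-K^δ)`); and sum of squares, truncated at `K^{a(1+δ)}`, at most
`K^{2a+ε}` (Markov again, with the truncated second moment `≤ T^{2-γ} μ/(μ-γ)` for `γ < μ`
close to `μ`). Together with `S ≥ K` and `∑ sᵢ² ≥ max sᵢ²`, these bounds pin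
`log (∑ sᵢ² / S²) / log K` within `ε` of `2a - 2`.
-/

theorem ENNReal.ofReal_sum_le {ι : Type*} (s : Finset ι) (f : ι → ℝ) :
    ENNReal.ofReal (∑ i ∈ s, f i) ≤ ∑ i ∈ s, ENNReal.ofReal (f i) := by
  classical
  induction s using Finset.induction with
  | empty => simp
  | insert _ _ h ih =>
    rw [Finset.sum_insert h, Finset.sum_insert h]
    exact ENNReal.ofReal_add_le.trans (add_le_add_right ih _)

lemma min_sq_le_rpow_mul_rpow {x T γ : ℝ} (hx : 0 ≤ x) (hT : 0 ≤ T) (hγ₀ : 0 ≤ γ) (hγ₂ : γ ≤ 2) :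
    min x T ^ 2 ≤ T ^ (2 - γ) * x ^ γ := by
  have hm : 0 ≤ min x T := le_min hx hT
  calc min x T ^ 2 = min x T ^ (2 - γ) * min x T ^ γ := by
        rw [← Real.rpow_add' hm (by norm_num), sub_add_cancel, Real.rpow_two]
    _ ≤ T ^ (2 - γ) * x ^ γ := by
        gcongr
        exacts [min_le_right _ _, min_le_left _ _]

section Pareto

variable {μ : ℝ}

lemma setLIntegral_Ioi_paretoDensity_mul_rpow (hμ : 0 < μ) {β c : ℝ} (hβ : β < μ) (hc : 0 < c) :
    ∫⁻ x in Ioi c, ENNReal.ofReal (μ * x ^ (-(1 + μ))) * ENNReal.ofReal (x ^ β)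
      = ENNReal.ofReal (μ / (μ - β) * c ^ (β - μ)) := by
  have hp : β - (1 + μ) < -1 := by linarith
  have hdens : ∀ x ∈ Ioi c, ENNReal.ofReal (μ * x ^ (-(1 + μ))) * ENNReal.ofReal (x ^ β)
      = ENNReal.ofReal (μ * x ^ (β - (1 + μ))) := fun x hx => by
    rw [← ENNReal.ofReal_mul (by positivity [hc.trans hx]), mul_assoc,
      ← Real.rpow_add (hc.trans hx)]
    ring_nf
  rw [setLIntegral_congr_fun measurableSet_Ioi hdens,
    ← ofReal_integral_eq_lintegral_ofReal ((integrableOn_Ioi_rpow_of_lt hp hc).const_mul μ)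
      ((ae_restrict_mem measurableSet_Ioi).mono fun x hx => by positivity [hc.trans hx]),
    integral_const_mul, integral_Ioi_rpow_of_lt hp hc]
  congr 1
  rw [show β - (1 + μ) + 1 = -(μ - β) by ring, show β - μ = -(μ - β) by ring]
  field_simp

lemma lintegral_paretoLaw {f : ℝ → ENNReal} (hf : Measurable f) :
    ∫⁻ x, f x ∂paretoLaw μ = ∫⁻ x in Ioi 1, ENNReal.ofReal (μ * x ^ (-(1 + μ))) * f x := by
  rw [paretoLaw, lintegral_withDensity_eq_lintegral_mul _ (by fun_prop) hf,
    setLIntegral_congr Ioi_ae_eq_Ici]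
  rfl

lemma lintegral_rpow_paretoLaw (hμ : 0 < μ) {β : ℝ} (hβ : β < μ) :
    ∫⁻ x, ENNReal.ofReal (x ^ β) ∂paretoLaw μ = ENNReal.ofReal (μ / (μ - β)) := by
  rw [lintegral_paretoLaw (by fun_prop), setLIntegral_Ioi_paretoDensity_mul_rpow hμ hβ one_pos,
    Real.one_rpow, mul_one]

lemma isProbabilityMeasure_paretoLaw (hμ : 0 < μ) : IsProbabilityMeasure (paretoLaw μ) := by
  constructor
  simpa [hμ.ne'] using lintegral_rpow_paretoLaw hμ hμ

lemma paretoLaw_Ioi (hμ : 0 < μ) {t : ℝ} (ht : 1 ≤ t) :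
    paretoLaw μ (Ioi t) = ENNReal.ofReal (t ^ (-μ)) := by
  have h := setLIntegral_Ioi_paretoDensity_mul_rpow hμ hμ (zero_lt_one.trans_le ht)
  simp only [Real.rpow_zero, ENNReal.ofReal_one, mul_one, sub_zero, zero_sub,
    div_self hμ.ne', one_mul] at h
  rw [paretoLaw, withDensity_apply _ measurableSet_Ioi, Measure.restrict_restrict measurableSet_Ioi,
    inter_eq_left.mpr (Ioi_subset_Ici ht), h]

lemma paretoLaw_Iic (hμ : 0 < μ) {t : ℝ} (ht : 1 ≤ t) :
    paretoLaw μ (Iic t) = ENNReal.ofReal (1 - t ^ (-μ)) := by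
  have := isProbabilityMeasure_paretoLaw hμ
  rw [← compl_Ioi, prob_compl_eq_one_sub measurableSet_Ioi, paretoLaw_Ioi hμ ht,
    ← ENNReal.ofReal_one, ← ENNReal.ofReal_sub _ (by positivity)]

lemma ae_one_le_paretoLaw : ∀ᵐ x ∂paretoLaw μ, 1 ≤ x :=
  (withDensity_absolutelyContinuous _ _).ae_le (ae_restrict_mem measurableSet_Ici)

lemma lintegral_min_sq_paretoLaw_le (hμ : 0 < μ) {γ T : ℝ} (hγ₀ : 0 ≤ γ) (hγμ : γ < μ)
    (hγ₂ : γ ≤ 2) (hT : 0 ≤ T) :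
    ∫⁻ x, ENNReal.ofReal (min x T ^ 2) ∂paretoLaw μ
      ≤ ENNReal.ofReal (T ^ (2 - γ) * (μ / (μ - γ))) := by
  calc ∫⁻ x, ENNReal.ofReal (min x T ^ 2) ∂paretoLaw μ
      ≤ ∫⁻ x, ENNReal.ofReal (T ^ (2 - γ)) * ENNReal.ofReal (x ^ γ) ∂paretoLaw μ := by
        refine lintegral_mono_ae (ae_one_le_paretoLaw.mono fun x hx => ?_)
        rw [← ENNReal.ofReal_mul (by positivity)]
        exact ENNReal.ofReal_le_ofReal (min_sq_le_rpow_mul_rpow (by linarith) hT hγ₀ hγ₂)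
    _ = ENNReal.ofReal (T ^ (2 - γ) * (μ / (μ - γ))) := by
        rw [lintegral_const_mul _ (by fun_prop), lintegral_rpow_paretoLaw hμ hγμ,
          ← ENNReal.ofReal_mul (by positivity)]

end Pareto

section IdenticallyDistributed

variable {Ω : Type*} [MeasurableSpace Ω] {P : Measure Ω} {ν : Measure ℝ} {X : ℕ → Ω → ℝ}

lemma measure_lt_sum_le (hX : ∀ i, Measurable (X i)) (hlaw : ∀ i, Measure.map (X i) P = ν)
    {g : ℝ → ℝ} (hg : Measurable g) {m : ℝ}
    (hm : ∫⁻ x, ENNReal.ofReal (g x) ∂ν ≤ ENNReal.ofReal m) (K : ℕ) {c : ℝ} (hc : 0 < c) :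
    P {ω | c < ∑ i ∈ Finset.range K, g (X i ω)} ≤ ENNReal.ofReal (K * m / c) := by
  have hmeas : ∀ i, Measurable fun ω => ENNReal.ofReal (g (X i ω)) :=
    fun i => (hg.comp (hX i)).ennreal_ofReal
  calc P {ω | c < ∑ i ∈ Finset.range K, g (X i ω)}
      ≤ P {ω | ENNReal.ofReal c ≤ ∑ i ∈ Finset.range K, ENNReal.ofReal (g (X i ω))} :=
        measure_mono fun ω hω =>
          (ENNReal.ofReal_le_ofReal (le_of_lt hω)).trans (ENNReal.ofReal_sum_le _ _)
    _ ≤ (∫⁻ ω, ∑ i ∈ Finset.range K, ENNReal.ofReal (g (X i ω)) ∂P) / ENNReal.ofReal c :=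
        meas_ge_le_lintegral_div (Finset.measurable_sum _ fun i _ => hmeas i).aemeasurable
          (ENNReal.ofReal_pos.mpr hc).ne' ENNReal.ofReal_ne_top
    _ ≤ K * ENNReal.ofReal m / ENNReal.ofReal c := by
        gcongr
        rw [lintegral_finsetSum _ fun i _ => hmeas i]
        calc _ ≤ ∑ _i ∈ Finset.range K, ENNReal.ofReal m := Finset.sum_le_sum fun i _ => by
              rw [← lintegral_map hg.ennreal_ofReal (hX i), hlaw i]
              exact hm
          _ = K * ENNReal.ofReal m := by simp
    _ = ENNReal.ofReal (K * m / c) := by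
        rw [ENNReal.ofReal_div_of_pos hc, ENNReal.ofReal_mul (Nat.cast_nonneg K),
          ENNReal.ofReal_natCast]

lemma measure_exists_lt_le (hX : ∀ i, Measurable (X i)) (hlaw : ∀ i, Measure.map (X i) P = ν)
    (K : ℕ) (c : ℝ) :
    P {ω | ∃ i ∈ Finset.range K, c < X i ω} ≤ K * ν (Ioi c) := by
  calc P {ω | ∃ i ∈ Finset.range K, c < X i ω}
      = P (⋃ i ∈ Finset.range K, X i ⁻¹' Ioi c) := by
        congr 1
        ext ω
        simp
    _ ≤ ∑ i ∈ Finset.range K, P (X i ⁻¹' Ioi c) := measure_biUnion_finset_le _ _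
    _ = K * ν (Ioi c) := by
        simp [← Measure.map_apply (hX _) measurableSet_Ioi, hlaw]

lemma measure_forall_le_eq (hX : ∀ i, Measurable (X i)) (hindep : iIndepFun X P)
    (hlaw : ∀ i, Measure.map (X i) P = ν) (K : ℕ) (c : ℝ) :
    P {ω | ∀ i ∈ Finset.range K, X i ω ≤ c} = ν (Iic c) ^ K := by
  have hinter : {ω | ∀ i ∈ Finset.range K, X i ω ≤ c} = ⋂ i ∈ Finset.range K, X i ⁻¹' Iic c := by
    ext ω
    simp
  rw [hinter, hindep.measure_inter_preimage_eq_mul _ fun _ _ => measurableSet_Iic]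
  simp [← Measure.map_apply (hX _) measurableSet_Iic, hlaw]

lemma ae_forall_of_ae_map_eq (hX : ∀ i, Measurable (X i)) (hlaw : ∀ i, Measure.map (X i) P = ν)
    {p : ℝ → Prop} (h : ∀ᵐ x ∂ν, p x) : ∀ᵐ ω ∂P, ∀ i, p (X i ω) :=
  ae_all_iff.mpr fun i => ae_of_ae_map (hX i).aemeasurable (hlaw i ▸ h)

end IdenticallyDistributed

section ParetoSample

variable {Ω : Type*} [MeasurableSpace Ω] {P : Measure Ω} {μ : ℝ} {s : ℕ → Ω → ℝ}

lemma measure_rpow_lt_sum_le (hμ : 1 < μ) (hmeas : ∀ i, Measurable (s i))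
    (hdist : ∀ i, Measure.map (s i) P = paretoLaw μ) {K : ℕ} (hK : 0 < K) (q : ℝ) :
    P {ω | (K : ℝ) ^ q < ∑ i ∈ Finset.range K, s i ω}
      ≤ ENNReal.ofReal (μ / (μ - 1) * (K : ℝ) ^ (1 - q)) := by
  have hK' : (0 : ℝ) < K := by exact_mod_cast hK
  have hmean : ∫⁻ x, ENNReal.ofReal x ∂paretoLaw μ ≤ ENNReal.ofReal (μ / (μ - 1)) := by
    simpa using (lintegral_rpow_paretoLaw (by linarith) hμ).le
  convert measure_lt_sum_le hmeas hdist (g := fun x => x) measurable_id' hmean K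
    (c := (K : ℝ) ^ q) (by positivity) using 2
  rw [Real.rpow_sub hK', Real.rpow_one]
  ring

lemma measure_rpow_lt_sum_min_sq_le (hμ : 0 < μ) (hmeas : ∀ i, Measurable (s i))
    (hdist : ∀ i, Measure.map (s i) P = paretoLaw μ) {γ : ℝ} (hγ₀ : 0 ≤ γ) (hγμ : γ < μ)
    (hγ₂ : γ ≤ 2) {K : ℕ} (hK : 0 < K) (q r : ℝ) :
    P {ω | (K : ℝ) ^ q < ∑ i ∈ Finset.range K, min (s i ω) ((K : ℝ) ^ r) ^ 2}
      ≤ ENNReal.ofReal (μ / (μ - γ) * (K : ℝ) ^ (1 + r * (2 - γ) - q)) := by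
  have hK' : (0 : ℝ) < K := by exact_mod_cast hK
  have hm := lintegral_min_sq_paretoLaw_le hμ hγ₀ hγμ hγ₂ (T := (K : ℝ) ^ r) (by positivity)
  convert measure_lt_sum_le hmeas hdist (g := fun x => min x ((K : ℝ) ^ r) ^ 2) (by fun_prop) hm K
    (c := (K : ℝ) ^ q) (by positivity) using 2
  rw [Real.rpow_sub hK', Real.rpow_add hK', Real.rpow_one, ← Real.rpow_mul hK'.le]
  ring

lemma measure_exists_rpow_lt_le (hμ : 0 < μ) (hmeas : ∀ i, Measurable (s i))
    (hdist : ∀ i, Measure.map (s i) P = paretoLaw μ) {K : ℕ} (hK : 0 < K) {r : ℝ} (hr : 0 ≤ r) :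
    P {ω | ∃ i ∈ Finset.range K, (K : ℝ) ^ r < s i ω} ≤ ENNReal.ofReal ((K : ℝ) ^ (1 - r * μ)) := by
  have hK' : (1 : ℝ) ≤ K := by exact_mod_cast hK
  refine (measure_exists_lt_le hmeas hdist K _).trans_eq ?_
  rw [paretoLaw_Ioi hμ (Real.one_le_rpow hK' hr), ← ENNReal.ofReal_natCast,
    ← ENNReal.ofReal_mul (Nat.cast_nonneg K), ← Real.rpow_mul (by positivity),
    Real.rpow_sub (by positivity), Real.rpow_one, mul_neg, Real.rpow_neg (by positivity),
    div_eq_mul_inv]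

lemma measure_forall_le_rpow_le (hμ : 0 < μ) (hmeas : ∀ i, Measurable (s i))
    (hindep : iIndepFun s P) (hdist : ∀ i, Measure.map (s i) P = paretoLaw μ) {K : ℕ}
    (hK : 0 < K) {r : ℝ} (hr : 0 ≤ r) :
    P {ω | ∀ i ∈ Finset.range K, s i ω ≤ (K : ℝ) ^ r}
      ≤ ENNReal.ofReal (Real.exp (-(K : ℝ) ^ (1 - r * μ))) := by
  have hK' : (1 : ℝ) ≤ K := by exact_mod_cast hK
  have htail : ((K : ℝ) ^ r) ^ (-μ) = (K : ℝ) ^ (1 - r * μ) / K := by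
    rw [← Real.rpow_mul (by positivity), Real.rpow_sub (by positivity), Real.rpow_one, mul_neg,
      Real.rpow_neg (by positivity)]
    field_simp
  have hle : (K : ℝ) ^ (1 - r * μ) ≤ K :=
    Real.rpow_le_self_of_one_le hK' (by nlinarith)
  rw [measure_forall_le_eq hmeas hindep hdist, paretoLaw_Iic hμ (Real.one_le_rpow hK' hr), htail,
    ← ENNReal.ofReal_pow (by rw [sub_nonneg, div_le_one (by positivity)]; exact hle)]
  exact ENNReal.ofReal_le_ofReal (Real.one_sub_div_pow_le_exp_neg hle)

end ParetoSample

lemma log_div_sq_div_log_mem_Icc {K S Q α β γ : ℝ} (hK : 1 < K) (hKS : K ≤ S) (hSα : S ≤ K ^ α)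
    (hQβ : K ^ β ≤ Q) (hQγ : Q ≤ K ^ γ) :
    Real.log (Q / S ^ 2) / Real.log K ∈ Icc (β - 2 * α) (γ - 2) := by
  have hK₀ : 0 < K := by linarith
  have hS₀ : 0 < S := by linarith
  have hQ₀ : 0 < Q := (Real.rpow_pos_of_pos hK₀ β).trans_le hQβ
  have hlogK : 0 < Real.log K := Real.log_pos hK
  have hlogS₁ : Real.log K ≤ Real.log S := Real.log_le_log hK₀ hKS
  have hlogS₂ : Real.log S ≤ α * Real.log K := by
    rw [← Real.log_rpow hK₀]
    exact Real.log_le_log hS₀ hSα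
  have hlogQ₁ : β * Real.log K ≤ Real.log Q := by
    rw [← Real.log_rpow hK₀]
    exact Real.log_le_log (by positivity) hQβ
  have hlogQ₂ : Real.log Q ≤ γ * Real.log K := by
    rw [← Real.log_rpow hK₀]
    exact Real.log_le_log hQ₀ hQγ
  rw [Real.log_div hQ₀.ne' (by positivity), Real.log_pow, mem_Icc, le_div_iff₀ hlogK,
    div_le_iff₀ hlogK]
  push_cast
  constructor <;> linarith

lemma abs_log_herfindahl_div_log_sub_le {K : ℕ} (hK : 2 ≤ K) {v : ℕ → ℝ}
    (hv : ∀ i ∈ Finset.range K, 1 ≤ v i) {a δ e : ℝ} (ha : a ≤ 1) (hδ : 0 ≤ δ) (hδe : 4 * δ ≤ e)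
    (hS : ∑ i ∈ Finset.range K, v i ≤ (K : ℝ) ^ (1 + δ))
    (hQ : ∑ i ∈ Finset.range K, v i ^ 2 ≤ (K : ℝ) ^ (2 * a + e))
    (hmax : ∃ i ∈ Finset.range K, (K : ℝ) ^ (a * (1 - δ)) < v i) :
    |Real.log ((∑ i ∈ Finset.range K, v i ^ 2) / (∑ i ∈ Finset.range K, v i) ^ 2) / Real.log K
      - (2 * a - 2)| ≤ e := by
  obtain ⟨j, hj, hvj⟩ := hmax
  have hK₁ : (1 : ℝ) < K := by exact_mod_cast hK
  have hKS : (K : ℝ) ≤ ∑ i ∈ Finset.range K, v i := by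
    simpa using Finset.sum_le_sum hv
  have hQ₁ : (K : ℝ) ^ (2 * (a * (1 - δ))) ≤ ∑ i ∈ Finset.range K, v i ^ 2 :=
    calc (K : ℝ) ^ (2 * (a * (1 - δ))) = ((K : ℝ) ^ (a * (1 - δ))) ^ 2 := by
          rw [← Real.rpow_natCast, ← Real.rpow_mul (by positivity)]
          ring_nf
      _ ≤ v j ^ 2 := by gcongr
      _ ≤ ∑ i ∈ Finset.range K, v i ^ 2 := Finset.single_le_sum (fun i _ => sq_nonneg (v i)) hj
  obtain ⟨hlo, hhi⟩ := log_div_sq_div_log_mem_Icc hK₁ hKS hS hQ₁ hQ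
  rw [abs_le]
  constructor <;> nlinarith [mul_le_mul_of_nonneg_right ha hδ]

lemma measure_herfindahl_deviation_le {Ω : Type*} [MeasurableSpace Ω] {P : Measure Ω} {μ : ℝ}
    (hμ₁ : 1 < μ) (hμ₂ : μ < 2) {s : ℕ → Ω → ℝ} (hmeas : ∀ i, Measurable (s i))
    (hindep : iIndepFun s P) (hdist : ∀ i, Measure.map (s i) P = paretoLaw μ)
    {e : ℝ} (he : 0 < e) (he₁ : e ≤ 1) {K : ℕ} (hK : 2 ≤ K) :
    P {ω | e < |Real.log ((∑ i ∈ Finset.range K, (s i ω) ^ 2) /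
        (∑ i ∈ Finset.range K, s i ω) ^ 2) / Real.log K - 2 * (1 - μ) / μ|}
      ≤ ENNReal.ofReal (μ / (μ - 1) * (K : ℝ) ^ (-(e / 8)))
        + ENNReal.ofReal (2 / e * (K : ℝ) ^ (-(e / 4)))
        + ENNReal.ofReal ((K : ℝ) ^ (-(e / 8)))
        + ENNReal.ofReal (Real.exp (-(K : ℝ) ^ (e / 8))) := by
  have hμ₀ : 0 < μ := by linarith
  have hK₀ : 0 < K := by omega
  have hK₁ : (1 : ℝ) ≤ K := by exact_mod_cast hK₀
  set δ := e / 8 with hδ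
  set γ := μ * (1 - e / 2) with hγ
  set a := μ⁻¹ with ha
  have ha₁ : a ≤ 1 := inv_le_one_of_one_le₀ hμ₁.le
  have haμ : a * μ = 1 := inv_mul_cancel₀ hμ₀.ne'
  have haγ : a * γ = 1 - e / 2 := by linear_combination (1 - e / 2) * haμ + a * hγ
  have hB₁ := measure_rpow_lt_sum_le hμ₁ hmeas hdist hK₀ (1 + δ)
  have hB₂ := measure_rpow_lt_sum_min_sq_le hμ₀ hmeas hdist (γ := γ) (by nlinarith)
    (by nlinarith) (by nlinarith) hK₀ (2 * a + e) (a * (1 + δ))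
  have hB₃ := measure_exists_rpow_lt_le hμ₀ hmeas hdist hK₀ (r := a * (1 + δ)) (by positivity)
  have hB₄ := measure_forall_le_rpow_le hμ₀ hmeas hindep hdist hK₀ (r := a * (1 - δ))
    (mul_nonneg (by positivity) (by linarith))
  rw [show 1 - (1 + δ) = -δ by ring] at hB₁
  rw [show μ / (μ - γ) = 2 / e by rw [hγ, show μ - μ * (1 - e / 2) = μ * e / 2 by ring]; field_simp]
    at hB₂
  rw [show 1 - a * (1 + δ) * μ = -δ by linear_combination (-(1 + δ)) * haμ] at hB₃
  rw [show 1 - a * (1 - δ) * μ = δ by linear_combination (-(1 - δ)) * haμ] at hB₄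
  -- since `a γ = 1 - e/2`, the exponent is `-e/2 + δ (2a - 1 + e/2)`
  have hexp : 1 + a * (1 + δ) * (2 - γ) - (2 * a + e) ≤ -(e / 4) := by
    have : a * (1 + δ) * (2 - γ) = (1 + δ) * (2 * a - a * γ) := by ring
    rw [this, haγ]
    nlinarith
  replace hB₂ := hB₂.trans <| ENNReal.ofReal_le_ofReal <|
    mul_le_mul_of_nonneg_left (Real.rpow_le_rpow_of_exponent_le hK₁ hexp) (by positivity)
  calc _ ≤ P ({ω | (K : ℝ) ^ (1 + δ) < ∑ i ∈ Finset.range K, s i ω}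
          ∪ {ω | (K : ℝ) ^ (2 * a + e)
              < ∑ i ∈ Finset.range K, min (s i ω) ((K : ℝ) ^ (a * (1 + δ))) ^ 2}
          ∪ {ω | ∃ i ∈ Finset.range K, (K : ℝ) ^ (a * (1 + δ)) < s i ω}
          ∪ {ω | ∀ i ∈ Finset.range K, s i ω ≤ (K : ℝ) ^ (a * (1 - δ))}) := ?_
    _ ≤ _ := (measure_union_le _ _).trans <| add_le_add ((measure_union_le _ _).trans <|
          add_le_add ((measure_union_le _ _).trans (add_le_add hB₁ hB₂)) hB₃) hB₄
  refine measure_mono_ae ?_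
  filter_upwards [ae_forall_of_ae_map_eq hmeas hdist ae_one_le_paretoLaw] with ω hone hbad
  show ω ∈ (_ : Set Ω)
  by_contra hgood
  simp only [mem_union, mem_ofPred_eq, not_or, not_lt, not_exists, not_and, not_forall,
    not_le, exists_prop] at hgood
  obtain ⟨⟨⟨hS, hQ⟩, hmax⟩, hbig⟩ := hgood
  have hsq : ∑ i ∈ Finset.range K, s i ω ^ 2
      = ∑ i ∈ Finset.range K, min (s i ω) ((K : ℝ) ^ (a * (1 + δ))) ^ 2 :=
    Finset.sum_congr rfl fun i hi => by rw [min_eq_left (hmax i hi)]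
  have hdev := abs_log_herfindahl_div_log_sub_le hK (fun i _ => hone i) ha₁ (by positivity)
    (by linarith) hS (hsq ▸ hQ) hbig
  rw [show 2 * a - 2 = 2 * (1 - μ) / μ by rw [ha]; field_simp] at hdev
  exact not_lt.mpr hdev hbad

lemma tendsto_ofReal_mul_natCast_rpow_neg (c : ℝ) {p : ℝ} (hp : 0 < p) :
    Tendsto (fun K : ℕ => ENNReal.ofReal (c * (K : ℝ) ^ (-p))) atTop (𝓝 0) := by
  simpa using ENNReal.tendsto_ofReal
    (((tendsto_rpow_neg_atTop hp).comp tendsto_natCast_atTop_atTop).const_mul c)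

lemma tendsto_ofReal_exp_neg_natCast_rpow {p : ℝ} (hp : 0 < p) :
    Tendsto (fun K : ℕ => ENNReal.ofReal (Real.exp (-(K : ℝ) ^ p))) atTop (𝓝 0) := by
  simpa using ENNReal.tendsto_ofReal (Real.tendsto_exp_neg_atTop_nhds_zero.comp
    ((tendsto_rpow_atTop hp).comp tendsto_natCast_atTop_atTop))

theorem herfindahl_typical_scaling_general
    {Ω : Type*} [MeasureSpace Ω]
    (μ : ℝ) (hμ1 : 1 < μ) (hμ2 : μ < 2)
    (s : ℕ → Ω → ℝ) (hmeas : ∀ i, Measurable (s i))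
    (hindep : iIndepFun s ℙ)
    (hdist : ∀ i, Measure.map (s i) ℙ = paretoLaw μ)
    (ε : ℝ) (hε : 0 < ε) :
    Tendsto (fun K : ℕ =>
        ℙ {ω | ε < |Real.log ((∑ i ∈ Finset.range K, (s i ω) ^ 2) /
            (∑ i ∈ Finset.range K, s i ω) ^ 2) / Real.log K - 2 * (1 - μ) / μ|})
      atTop (𝓝 0) := by
  have he : 0 < min ε 1 := lt_min hε one_pos
  refine tendsto_of_tendsto_of_tendsto_of_le_of_le' tendsto_const_nhds ?_
    (.of_forall fun _ => zero_le)
    ((eventually_ge_atTop 2).mono fun K hK =>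
      (measure_mono fun ω hω => (min_le_left ε 1).trans_lt hω).trans
        (measure_herfindahl_deviation_le hμ1 hμ2 hmeas hindep hdist he (min_le_right ε 1) hK))
  have hsmall :
      Tendsto (fun K : ℕ => ENNReal.ofReal ((K : ℝ) ^ (-(min ε 1 / 8)))) atTop (𝓝 0) := by
    simpa using tendsto_ofReal_mul_natCast_rpow_neg 1 (by positivity : 0 < min ε 1 / 8)
  simpa using (((tendsto_ofReal_mul_natCast_rpow_neg _ (by positivity)).add
    (tendsto_ofReal_mul_natCast_rpow_neg _ (by positivity))).add hsmall).add
    (tendsto_ofReal_exp_neg_natCast_rpow (by positivity))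

/-- For `1 < μ < 2` and the Herfindahl–Hirschman index `H_K` of `K` i.i.d.
Pareto(μ) sub-unit sizes, `log H_K / log K` converges in probability to `2(1-μ)/μ`:
the typical Herfindahl index scales as `K^{2(1-μ)/μ}`. -/
theorem herfindahl_typical_scaling
    {Ω : Type*} [MeasureSpace Ω] [IsProbabilityMeasure (ℙ : Measure Ω)]
    (μ : ℝ) (hμ1 : 1 < μ) (hμ2 : μ < 2)
    (s : ℕ → Ω → ℝ) (hmeas : ∀ i, Measurable (s i))
    (hindep : iIndepFun s ℙ)
    (hdist : ∀ i, Measure.map (s i) ℙ = paretoLaw μ)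
    (ε : ℝ) (hε : 0 < ε) :
    Tendsto (fun K : ℕ =>
        ℙ {ω | ε < |Real.log ((∑ i ∈ Finset.range K, (s i ω) ^ 2) /
            (∑ i ∈ Finset.range K, s i ω) ^ 2) / Real.log K - 2 * (1 - μ) / μ|})
      atTop (𝓝 0) :=
  herfindahl_typical_scaling_general μ hμ1 hμ2 s hmeas hindep hdist ε hε
end
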